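/- Let P be a c-regular cd-structure on a category 𝒳. Then for every distinguished square of P with corners B, A, Y, X, the natural morphism ρ(A) ⊔_{ρ(B)} ρ(Y) → ρ(X) is an isomorphism in the category of τ_P^c-sheaves of sets. -/

import Mathlib

open CategoryTheory Limits Opposite

universe w v u

namespace CdFormal

variable {C : Type u} [Category.{v} C] {D : Type w} [Category.{v} D]

/-- A commutative square in `C`: `B → Y`, `B → A`, `p : Y → X`, `i : A → X`. -/
structure CDSquare (C : Type u) [Category.{v} C] where
  B : C
  A : C
  Y : C
  X : C
  e : B ⟶ A
  q : B ⟶ Y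
  i : A ⟶ X
  p : Y ⟶ X
  w : q ≫ p = e ≫ i

/-- The sieve on `X` generated by the feet `{i, p}` of a square. -/
def CDSquare.sieve (Q : CDSquare C) : Sieve Q.X where
  arrows Z g := (∃ h : Z ⟶ Q.A, g = h ≫ Q.i) ∨ (∃ h : Z ⟶ Q.Y, g = h ≫ Q.p)
  downward_closed := by
    rintro Z Z' g (⟨h, rfl⟩ | ⟨h, rfl⟩) g'
    · exact Or.inl ⟨g' ≫ h, by simp⟩
    · exact Or.inr ⟨g' ≫ h, by simp⟩

/-- The c-topology associated to a cd-structure `P`: the coarsest Grothendieck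
topology for which the sieve generated by the feet of each distinguished square is covering. -/
def cTopology (P : Set (CDSquare C)) : GrothendieckTopology C :=
  sInf {J | ∀ Q ∈ P, Q.sieve ∈ J Q.X}

/-- The class of simple `P`-covers. -/
inductive IsSimpleCover (P : Set (CDSquare C)) : (X : C) → Presieve X → Prop
  | iso {X' X : C} (f : X' ⟶ X) (hf : IsIso f) : IsSimpleCover P X (Presieve.singleton f)
  | glue (Q : CDSquare C) (hQ : Q ∈ P) (RY : Presieve Q.Y) (RA : Presieve Q.A)
      (hY : IsSimpleCover P Q.Y RY) (hA : IsSimpleCover P Q.A RA) :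
      IsSimpleCover P Q.X (fun Z g =>
        (∃ h : Z ⟶ Q.Y, RY h ∧ g = h ≫ Q.p) ∨ (∃ h : Z ⟶ Q.A, RA h ∧ g = h ≫ Q.i))

/-- `P` is c-complete: every covering sieve for the associated c-topology contains a
simple `P`-cover. -/
def IsCComplete (P : Set (CDSquare C)) : Prop :=
  ∀ ⦃X : C⦄ (S : Sieve X), S ∈ cTopology P X →
    ∃ R : Presieve X, IsSimpleCover P X R ∧ ∀ ⦃Z⦄ (g : Z ⟶ X), R g → S g

/-- `ρ(X)`: the sheafification of the presheaf represented by `X`. -/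
noncomputable def rho (J : GrothendieckTopology C) (X : C) : Sheaf J (Type (max u v)) :=
  (presheafToSheaf J _).obj (yoneda.obj X ⋙ uliftFunctor.{u})

/-- Functoriality of `ρ`. -/
noncomputable def rhoMap (J : GrothendieckTopology C) {X Y : C} (f : X ⟶ Y) :
    rho J X ⟶ rho J Y :=
  (presheafToSheaf J _).map (Functor.whiskerRight (yoneda.map f) uliftFunctor.{u})

lemma rhoMap_comp (J : GrothendieckTopology C) {X Y Z : C} (f : X ⟶ Y) (g : Y ⟶ Z) :
    rhoMap J (f ≫ g) = rhoMap J f ≫ rhoMap J g := by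
  simp only [rhoMap, Functor.map_comp, Functor.whiskerRight_comp]
  exact rfl

instance sheafHasColimitsOfShapeWalkingPair (J : GrothendieckTopology C) :
    HasColimitsOfShape (Discrete WalkingPair) (Sheaf J (Type (max u v))) :=
  Sheaf.instHasColimitsOfShape (J := J) (D := Type (max u v)) (K := Discrete WalkingPair)

/-- The canonical comparison morphism
`ρ(Y) ⊔ (ρ(B) ×_{ρ(A)} ρ(B)) ⟶ ρ(Y) ×_{ρ(X)} ρ(Y)` associated to a square. -/
noncomputable def regCompare (J : GrothendieckTopology C) (Q : CDSquare C) :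
    (rho J Q.Y) ⨿ (pullback (rhoMap J Q.e) (rhoMap J Q.e)) ⟶
      pullback (rhoMap J Q.p) (rhoMap J Q.p) :=
  coprod.desc (pullback.lift (𝟙 _) (𝟙 _) rfl)
    (pullback.lift (pullback.fst _ _ ≫ rhoMap J Q.q) (pullback.snd _ _ ≫ rhoMap J Q.q)
      (by
        rw [Category.assoc, Category.assoc, ← rhoMap_comp, Q.w, rhoMap_comp,
          ← Category.assoc, ← Category.assoc, pullback.condition]))

/-- `P` is c-regular. -/
def IsCRegular (P : Set (CDSquare C)) : Prop :=
  ∀ Q ∈ P, IsPullback Q.q Q.e Q.p Q.i ∧ Mono Q.i ∧ Epi (regCompare (cTopology P) Q)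

/-- The image of a square under a functor. -/
@[simps]
def CDSquare.map (F : C ⥤ D) (Q : CDSquare C) : CDSquare D where
  B := F.obj Q.B
  A := F.obj Q.A
  Y := F.obj Q.Y
  X := F.obj Q.X
  e := F.map Q.e
  q := F.map Q.q
  i := F.map Q.i
  p := F.map Q.p
  w := by rw [← F.map_comp, ← F.map_comp, Q.w]

/-- The induced cd-structure on a slice category. -/
def sliceCd (P : Set (CDSquare C)) (X : C) : Set (CDSquare (Over X)) :=
  {Q | Q.map (Over.forget X) ∈ P}

/-- A dimension function on a category: an initial object `empty` together with a
dimension taking the minimal value `bot` exactly on objects isomorphic to `empty`. -/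
structure DimensionFunction (C : Type u) [Category.{v} C] (Λ : Type w) [Preorder Λ] where
  empty : C
  init : Nonempty (IsInitial empty)
  dim : C → Λ
  bot : Λ
  bot_le : ∀ X : C, bot ≤ dim X
  dim_eq_bot_iff : ∀ X : C, dim X = bot ↔ Nonempty (X ≅ empty)

/-- A cd-structure is compatible with a dimension function. -/
def CompatibleWithDim {Λ : Type w} [Preorder Λ] (P : Set (CDSquare C))
    (Dm : DimensionFunction C Λ) : Prop :=
  ∃ P' : Set (CDSquare C), P' ⊆ P ∧
    (∀ Q ∈ P', Dm.dim Q.A ≤ Dm.dim Q.X ∧ Dm.dim Q.Y ≤ Dm.dim Q.X ∧ Dm.dim Q.B < Dm.dim Q.X) ∧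
    ∀ Q ∈ P, ∃ R : Presieve Q.X, IsSimpleCover P' Q.X R ∧
      ∀ ⦃Z⦄ (g : Z ⟶ Q.X), R g → Q.sieve g

end CdFormal

/-!
`ρ(A) ⊔ ρ(Y) ⟶ ρ(X)` is an epimorphism because the sieve `⟨i, p⟩` covers `X`.

For injectivity, argue on sections, which locally come from `ρ(A)` or from `ρ(Y)`. Two sections
of `ρ(A)` with the same image agree because `ρ(i)` is mono; a section of `ρ(A)` and one of `ρ(Y)`
with the same image come from one section of `ρ(B)` because `ρ` preserves the cartesian square.
Two sections of `ρ(Y)` with the same image form a section of `ρ(Y) ×_{ρ(X)} ρ(Y)`, which by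
c-regularity locally lies on the diagonal or comes from `ρ(B) ×_{ρ(A)} ρ(B)`; on both pieces the
two projections to `ρ(Y)` agree after composing into the pushout.
-/

namespace CategoryTheory.Limits

variable {𝒞 : Type*} [Category 𝒞] {B A Y X : 𝒞}
  {e : B ⟶ A} {q : B ⟶ Y} {i : A ⟶ X} {p : Y ⟶ X}

instance epi_coprod_desc_pushout_inl_inr [HasPushout e q] [HasBinaryCoproduct A Y] :
    Epi (coprod.desc (pushout.inl e q) (pushout.inr e q)) :=
  ⟨fun α β h => pushout.hom_ext
    (by simpa only [coprod.desc_comp, coprod.inl_desc] using congr(coprod.inl ≫ $h))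
    (by simpa only [coprod.desc_comp, coprod.inr_desc] using congr(coprod.inr ≫ $h))⟩

/-- For the square `ρ(Q)` this is `regCompare`. -/
noncomputable def kernelPairComparison (w : q ≫ p = e ≫ i) [HasPullback e e] [HasPullback p p]
    [HasBinaryCoproduct Y (pullback e e)] : Y ⨿ pullback e e ⟶ pullback p p :=
  coprod.desc (pullback.lift (𝟙 Y) (𝟙 Y) rfl)
    (pullback.lift (pullback.fst e e ≫ q) (pullback.snd e e ≫ q)
      (by rw [Category.assoc, Category.assoc, w, pullback.condition_assoc]))

lemma pullback_fst_comp_pushout_inr (w : q ≫ p = e ≫ i) [HasPullback e e] [HasPullback p p]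
    [HasBinaryCoproduct Y (pullback e e)] [HasPushout e q] [Epi (kernelPairComparison w)] :
    pullback.fst p p ≫ pushout.inr e q = pullback.snd p p ≫ pushout.inr e q := by
  rw [← cancel_epi (kernelPairComparison w)]
  ext1 <;> simp only [kernelPairComparison, coprod.inl_desc_assoc, coprod.inr_desc_assoc,
    pullback.lift_fst_assoc, pullback.lift_snd_assoc, Category.assoc, ← pushout.condition,
    pullback.condition_assoc]

end CategoryTheory.Limits

namespace CategoryTheory.Presheaf

variable {C : Type u} [Category.{v} C] {J : GrothendieckTopology C}

lemma isLocallySurjective_of_imageSieve_app_mem {F G H : Cᵒᵖ ⥤ Type w} (f : F ⟶ H)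
    (η : G ⟶ H) (hη : IsLocallySurjective J η)
    (h : ∀ ⦃Z : C⦄ (u : G.obj (op Z)), imageSieve f (η.app _ u) ∈ J Z) :
    IsLocallySurjective J f :=
  ⟨fun s => J.transitive (hη.imageSieve_mem s) _ fun _ g ⟨u, hu⟩ => by
    rw [pullback_imageSieve, ← hu]
    exact h u⟩

end CategoryTheory.Presheaf

namespace CategoryTheory.Sheaf

variable {C : Type u} [Category.{v} C] {J : GrothendieckTopology C}

lemma ext_of_mem {F : Sheaf J (Type w)} {Z : C} {x y : F.obj.obj (op Z)} {S : Sieve Z}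
    (hS : S ∈ J Z) (h : ∀ ⦃Z' : C⦄ (g : Z' ⟶ Z), S g → F.obj.map g.op x = F.obj.map g.op y) :
    x = y :=
  (((isSheaf_iff_isSheaf_of_type J _).1 F.property).isSeparated S hS).ext h

lemma exists_app_of_isPullback {R S T W : Sheaf J (Type w)} {fst : R ⟶ T} {snd : R ⟶ S}
    {f : T ⟶ W} {g : S ⟶ W} (h : IsPullback fst snd f g) {o : Cᵒᵖ}
    (t : T.obj.obj o) (s : S.obj.obj o) (hts : f.hom.app o t = g.hom.app o s) :
    ∃ r, fst.hom.app o r = t ∧ snd.hom.app o r = s :=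
  Types.exists_of_isPullback (h.map (sheafToPresheaf J _ ⋙ (evaluation Cᵒᵖ _).obj o)) t s hts

lemma injective_app_of_mono {F G : Sheaf J (Type w)} (f : F ⟶ G) [Mono f] (o : Cᵒᵖ) :
    Function.Injective (f.hom.app o) := by
  have : Mono f.hom := (sheafToPresheaf J _).map_mono f
  exact (mono_iff_injective _).1 inferInstance

lemma imageSieve_sup_mem_of_epi_coprod_desc {U V K : Sheaf J (Type (max u v))}
    (f : U ⟶ K) (g : V ⟶ K) [Epi (coprod.desc f g)] {Z : C} (s : K.obj.obj (op Z)) :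
    Presheaf.imageSieve f.hom s ⊔ Presheaf.imageSieve g.hom s ∈ J Z := by
  -- Sections of the sheaf coproduct `U ⨿ V` are only locally sections of `U` or `V`, so we pass
  -- to the presheaf coproduct, whose sheafification still maps epimorphically onto `K`.
  let adj := sheafificationAdjunction J (Type (max u v))
  let d : U.obj ⨿ V.obj ⟶ K.obj := coprod.desc f.hom g.hom
  have hd : Epi ((adj.homEquiv _ K).symm d) := by
    refine ⟨fun {M} α β hαβ => ?_⟩
    have h : d ≫ α.hom = d ≫ β.hom := by
      have := congrArg (adj.homEquiv _ M) hαβ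
      rwa [adj.homEquiv_naturality_right, adj.homEquiv_naturality_right,
        Equiv.apply_symm_apply] at this
    rw [← cancel_epi (coprod.desc f g)]
    ext1 <;> simp only [coprod.inl_desc_assoc, coprod.inr_desc_assoc] <;> apply Sheaf.hom_ext
    · simpa only [d, coprod.inl_desc_assoc, ObjectProperty.FullSubcategory.comp_hom]
        using congr(coprod.inl ≫ $h)
    · simpa only [d, coprod.inr_desc_assoc, ObjectProperty.FullSubcategory.comp_hom]
        using congr(coprod.inr ≫ $h)
  have : Presheaf.IsLocallySurjective J d := by
    have : Presheaf.IsLocallySurjective J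
        ((sheafToPresheaf J _).map ((adj.homEquiv _ K).symm d)) :=
      (Sheaf.isLocallySurjective_iff_epi _).2 hd
    rw [← Equiv.apply_symm_apply (adj.homEquiv _ K) d, adj.homEquiv_unit]
    infer_instance
  refine J.superset_covering ?_ (Presheaf.imageSieve_mem J d s)
  rintro Z' h ⟨t, ht⟩
  obtain ⟨⟨j⟩, y, rfl⟩ := FunctorToTypes.jointly_surjective' (pair U.obj V.obj) (op Z') t
  cases j
  · refine Or.inl ⟨y, ht ▸ ?_⟩
    rw [← NatTrans.comp_app_apply]
    exact congr_arg (fun φ : U.obj ⟶ K.obj => φ.app (op Z') y)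
      (coprod.inl_desc f.hom g.hom).symm
  · refine Or.inr ⟨y, ht ▸ ?_⟩
    rw [← NatTrans.comp_app_apply]
    exact congr_arg (fun φ : V.obj ⟶ K.obj => φ.app (op Z') y)
      (coprod.inr_desc f.hom g.hom).symm

variable {B A Y X : Sheaf J (Type (max u v))}
  {e : B ⟶ A} {q : B ⟶ Y} {i : A ⟶ X} {p : Y ⟶ X}

lemma pushout_inl_app_eq_inr_app (hpb : IsPullback q e p i) {o : Cᵒᵖ} {a : A.obj.obj o}
    {t : Y.obj.obj o} (h : i.hom.app o a = p.hom.app o t) :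
    (pushout.inl e q).hom.app o a = (pushout.inr e q).hom.app o t := by
  obtain ⟨b, rfl, rfl⟩ := exists_app_of_isPullback hpb t a h.symm
  simp only [← NatTrans.comp_app_apply, ← ObjectProperty.FullSubcategory.comp_hom,
    pushout.condition]

lemma pushout_inr_app_eq_inr_app (w : q ≫ p = e ≫ i) [Epi (kernelPairComparison w)]
    {o : Cᵒᵖ} {t t' : Y.obj.obj o} (h : p.hom.app o t = p.hom.app o t') :
    (pushout.inr e q).hom.app o t = (pushout.inr e q).hom.app o t' := by
  obtain ⟨ζ, rfl, rfl⟩ := exists_app_of_isPullback (IsPullback.of_hasPullback p p) t t' h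
  simp only [← NatTrans.comp_app_apply, ← ObjectProperty.FullSubcategory.comp_hom,
    pullback_fst_comp_pushout_inr w]

theorem mono_pushout_desc (hpb : IsPullback q e p i) [Mono i]
    [Epi (kernelPairComparison hpb.w)] : Mono (pushout.desc i p hpb.w.symm) := by
  have inj : ∀ {o : Cᵒᵖ} {x y : (pushout e q).obj.obj o},
      ((∃ a, (pushout.inl e q).hom.app o a = x) ∨ ∃ t, (pushout.inr e q).hom.app o t = x) →
      ((∃ a, (pushout.inl e q).hom.app o a = y) ∨ ∃ t, (pushout.inr e q).hom.app o t = y) →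
      (pushout.desc i p hpb.w.symm).hom.app o x = (pushout.desc i p hpb.w.symm).hom.app o y →
      x = y := by
    rintro o _ _ (⟨a, rfl⟩ | ⟨t, rfl⟩) (⟨a', rfl⟩ | ⟨t', rfl⟩) h <;>
      simp only [← NatTrans.comp_app_apply, ← ObjectProperty.FullSubcategory.comp_hom,
        pushout.inl_desc, pushout.inr_desc] at h
    · rw [injective_app_of_mono i o h]
    · exact pushout_inl_app_eq_inr_app hpb h
    · exact (pushout_inl_app_eq_inr_app hpb h.symm).symm
    · exact pushout_inr_app_eq_inr_app hpb.w h
  refine mono_of_injective _ fun ⟨Z⟩ x y hxy => ext_of_mem (J.intersection_covering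
    (imageSieve_sup_mem_of_epi_coprod_desc (pushout.inl e q) (pushout.inr e q) x)
    (imageSieve_sup_mem_of_epi_coprod_desc (pushout.inl e q) (pushout.inr e q) y)) ?_
  rintro Z' g ⟨hx, hy⟩
  exact inj hx hy (by rw [NatTrans.naturality_apply, NatTrans.naturality_apply, hxy])

end CategoryTheory.Sheaf

namespace CdFormal

section

variable {C : Type u} [Category.{v} C]

lemma sieve_mem_cTopology {P : Set (CDSquare C)} {Q : CDSquare C} (hQ : Q ∈ P) :
    Q.sieve ∈ cTopology P Q.X := by
  rw [cTopology, GrothendieckTopology.mem_sInf]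
  exact fun _ hJ => hJ Q hQ

/-- Its action on morphisms is `rhoMap J`, definitionally. -/
noncomputable abbrev rhoFunctor (J : GrothendieckTopology C) : C ⥤ Sheaf J (Type (max u v)) :=
  uliftYoneda.{u} ⋙ presheafToSheaf J _

variable {J : GrothendieckTopology C}

lemma isPullback_rhoMap {B A Y X : C} {e : B ⟶ A} {q : B ⟶ Y} {i : A ⟶ X} {p : Y ⟶ X}
    (h : IsPullback q e p i) : IsPullback (rhoMap J q) (rhoMap J e) (rhoMap J p) (rhoMap J i) :=
  h.map (rhoFunctor J)

instance mono_rhoMap {A X : C} (i : A ⟶ X) [Mono i] : Mono (rhoMap J i) :=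
  (rhoFunctor J).map_mono i

noncomputable def rhoSection (J : GrothendieckTopology C) {X Z : C} (m : Z ⟶ X) :
    (rho J X).obj.obj (op Z) :=
  (toSheafify J (yoneda.obj X ⋙ uliftFunctor.{u})).app (op Z) ⟨m⟩

lemma rhoMap_app_rhoSection {A X Z : C} (f : A ⟶ X) (m : Z ⟶ A) :
    (rhoMap J f).hom.app (op Z) (rhoSection J m) = rhoSection J (m ≫ f) :=
  (ConcreteCategory.congr_hom (NatTrans.congr_app
    (toSheafify_naturality J (Functor.whiskerRight (yoneda.map f) uliftFunctor.{u})) (op Z))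
      ⟨m⟩).symm

lemma rho_map_rhoSection {X Z Z' : C} (g : Z' ⟶ Z) (m : Z ⟶ X) :
    (rho J X).obj.map g.op (rhoSection J m) = rhoSection J (g ≫ m) :=
  (NatTrans.naturality_apply _ g.op _).symm

lemma isLocallySurjective_of_imageSieve_rhoSection_mem {X : C} {M : Sheaf J (Type (max u v))}
    (f : M ⟶ rho J X)
    (h : ∀ ⦃Z : C⦄ (t : Z ⟶ X), Presheaf.imageSieve f.hom (rhoSection J t) ∈ J Z) :
    Sheaf.IsLocallySurjective f :=
  Presheaf.isLocallySurjective_of_imageSieve_app_mem f.hom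
    (toSheafify J (yoneda.obj X ⋙ uliftFunctor.{u}))
    (inferInstanceAs (Presheaf.IsLocallySurjective J (toSheafify J _))) fun _ t => h t.down

theorem epi_pushout_desc_rhoMap {Q : CDSquare C} (hQ : Q.sieve ∈ J Q.X)
    (w : rhoMap J Q.e ≫ rhoMap J Q.i = rhoMap J Q.q ≫ rhoMap J Q.p) :
    Epi (pushout.desc (rhoMap J Q.i) (rhoMap J Q.p) w) := by
  have : Sheaf.IsLocallySurjective (pushout.desc (rhoMap J Q.i) (rhoMap J Q.p) w) := by
    refine isLocallySurjective_of_imageSieve_rhoSection_mem _ fun Z t =>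
      J.superset_covering ?_ (J.pullback_stable t hQ)
    rintro Z' g (⟨m, hm⟩ | ⟨m, hm⟩)
    · refine ⟨(pushout.inl (rhoMap J Q.e) (rhoMap J Q.q)).hom.app _ (rhoSection J m), ?_⟩
      rw [rho_map_rhoSection, hm, ← rhoMap_app_rhoSection]
      exact congr_arg (fun φ => φ.hom.app (op Z') (rhoSection J m)) (pushout.inl_desc _ _ w)
    · refine ⟨(pushout.inr (rhoMap J Q.e) (rhoMap J Q.q)).hom.app _ (rhoSection J m), ?_⟩
      rw [rho_map_rhoSection, hm, ← rhoMap_app_rhoSection]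
      exact congr_arg (fun φ => φ.hom.app (op Z') (rhoSection J m)) (pushout.inr_desc _ _ w)
  infer_instance

end

/-- For a c-regular cd-structure `P`, the natural morphism
`ρ(A) ⊔_{ρ(B)} ρ(Y) ⟶ ρ(X)` associated to a distinguished square is an isomorphism
of sheaves of sets for the associated c-topology. -/
theorem rho_pushout_isIso
    {C : Type u} [Category.{v} C] (P : Set (CDSquare C)) (hP : IsCRegular P)
    (Q : CDSquare C) (hQ : Q ∈ P) :
    IsIso (pushout.desc (f := rhoMap (cTopology P) Q.e) (g := rhoMap (cTopology P) Q.q)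
      (rhoMap (cTopology P) Q.i) (rhoMap (cTopology P) Q.p)
      (by rw [← rhoMap_comp, ← rhoMap_comp, Q.w])) := by
  obtain ⟨hpb, hi, hreg⟩ := hP Q hQ
  have hρpb := isPullback_rhoMap (J := cTopology P) hpb
  have : Epi (kernelPairComparison hρpb.w) := hreg
  have : Mono (pushout.desc _ _ hρpb.w.symm) := Sheaf.mono_pushout_desc hρpb
  have : Epi (pushout.desc _ _ hρpb.w.symm) := epi_pushout_desc_rhoMap (sieve_mem_cTopology hQ) _
  exact isIso_of_mono_of_epi _

end CdFormal
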